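/- arXiv:2505.10308 — 2 statements merged into one kernel-verified Lean document; each statement's English description precedes it below -/
import Mathlib

section
/- Let A = [a_{ij}] be a 2×(m+1) matrix with entries in {±1,…,±n} whose columns are distinct, and suppose A contains an anti-circuit, i.e., there exist distinct columns j₁,…,j_p such that a_{2,j_α} = −a_{1,j_{α+1}} for 1 ≤ α ≤ p−1 and a_{2,j_p} = −a_{1,j₁}. Then A is invalid: there exist b = (b₁,b₂) ∈ ℝ² nonzero and a convex combination of the columns of the induced matrix M(A,b) equal to the zero vector in ℝⁿ. (In fact one may take b = (1,1) and coefficients 1/p on columns j₁,…,j_p.) -/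
/-- The vector in `ℝⁿ` corresponding to an entry `a = s·I` with `s ∈ {±1}`,
`I ∈ {1,…,n}`: the signed standard basis vector `s • e_I`. -/
def entryVec (n : ℕ) (a : ℤ) : EuclideanSpace ℝ (Fin n) :=
  WithLp.toLp 2 (fun i => if ((i : ℕ) : ℤ) + 1 = a then 1 else if ((i : ℕ) : ℤ) + 1 = -a then -1 else 0)

/-- The `j`-th column of the induced matrix `M(A,b)` of a `2 × (m+1)` matrix `A` with
entries in `{±1,…,±n}` and `b ∈ ℝ²`. -/
noncomputable def inducedCol (n m : ℕ) (A : Fin 2 → Fin (m + 1) → ℤ) (b : Fin 2 → ℝ) :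
    Fin (m + 1) → EuclideanSpace ℝ (Fin n) :=
  fun j => b 0 • entryVec n (A 0 j) + b 1 • entryVec n (A 1 j)

/-- `A` is valid if for every nonzero `b ∈ ℝ²` the convex hull of the columns of the
induced matrix `M(A,b)` does not contain the origin. -/
def IsValid (n m : ℕ) (A : Fin 2 → Fin (m + 1) → ℤ) : Prop :=
  ∀ b : Fin 2 → ℝ, b ≠ 0 →
    (0 : EuclideanSpace ℝ (Fin n)) ∉ convexHull ℝ (Set.range (inducedCol n m A b))

/-- A circuit in a `k × (m+1)` matrix: distinct rows `i₀, i₁` and distinct columns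
`j₁,…,j_p` with `a_{i₁,j_α} = a_{i₀,j_{α+1}}` cyclically. -/
def HasCircuit {k m : ℕ} (A : Fin k → Fin (m + 1) → ℤ) : Prop :=
  ∃ i₀ i₁ : Fin k, i₀ ≠ i₁ ∧ ∃ p : ℕ, ∃ j : Fin (p + 1) → Fin (m + 1),
    Function.Injective j ∧ ∀ α, A i₁ (j α) = A i₀ (j (α + 1))

/-- An anti-circuit: as a circuit, but with `a_{i₁,j_α} = −a_{i₀,j_{α+1}}` cyclically. -/
def HasAntiCircuit {k m : ℕ} (A : Fin k → Fin (m + 1) → ℤ) : Prop :=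
  ∃ i₀ i₁ : Fin k, i₀ ≠ i₁ ∧ ∃ p : ℕ, ∃ j : Fin (p + 1) → Fin (m + 1),
    Function.Injective j ∧ ∀ α, A i₁ (j α) = -(A i₀ (j (α + 1)))

/-! With `b = (1, 1)`, the columns of `M(A, b)` along an anti-circuit `j₁, …, j_p` are
`e(a_{1,j_α}) + e(a_{2,j_α})` with `e(a_{2,j_α}) = -e(a_{1,j_{α+1}})`, so their sum telescopes
cyclically to `0`, and their barycentre is the origin. -/

open Finset

lemma entryVec_neg (n : ℕ) (a : ℤ) : entryVec n (-a) = -entryVec n a := by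
  ext i
  change entryVec n (-a) i = -entryVec n a i
  simp only [entryVec, PiLp.toLp_apply, neg_neg]
  have hpos : (0 : ℤ) < ((i : ℕ) : ℤ) + 1 := by positivity
  split_ifs <;> first | omega | norm_num

lemma Fin.sum_add_neg_add_one_eq_zero {M : Type*} [AddCommGroup M] {p : ℕ} (f g : Fin (p + 1) → M)
    (hg : ∀ α, g α = -f (α + 1)) : ∑ α, (f α + g α) = 0 := by
  have hshift : ∑ α, f (α + 1) = ∑ α, f α := Fintype.sum_equiv (Equiv.addRight 1) _ _ fun _ => rfl
  simp only [hg, sum_add_distrib, sum_neg_distrib, hshift, add_neg_cancel]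

lemma zero_mem_convexHull_of_sum_eq_zero {ι E : Type*} [Fintype ι] [Nonempty ι]
    [AddCommGroup E] [Module ℝ E] (z : ι → E) (hz : ∑ i, z i = 0) :
    (0 : E) ∈ convexHull ℝ (Set.range z) := by
  have hmem := centerMass_mem_convexHull (univ : Finset ι) (w := fun _ => (1 : ℝ)) (z := z)
    (fun _ _ => zero_le_one) (by simp [Fintype.card_pos]) fun i _ => Set.mem_range_self i
  simpa only [centerMass, one_smul, hz, smul_zero] using hmem

theorem stmt9_general (n m : ℕ) (A : Fin 2 → Fin (m + 1) → ℤ)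
    (hanti : ∃ p : ℕ, ∃ j : Fin (p + 1) → Fin (m + 1),
      Function.Injective j ∧ ∀ α, A 1 (j α) = -(A 0 (j (α + 1)))) :
    ∃ b : Fin 2 → ℝ, b ≠ 0 ∧
      (0 : EuclideanSpace ℝ (Fin n)) ∈ convexHull ℝ (Set.range (inducedCol n m A b)) := by
  obtain ⟨p, j, -, hcyc⟩ := hanti
  refine ⟨1, one_ne_zero, convexHull_mono (Set.range_comp_subset_range j _) ?_⟩
  refine zero_mem_convexHull_of_sum_eq_zero _ ?_
  simpa [inducedCol] using Fin.sum_add_neg_add_one_eq_zero (fun α => entryVec n (A 0 (j α)))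
    (fun α => entryVec n (A 1 (j α))) fun α => by rw [hcyc α, entryVec_neg]

/-- a `2 × (m+1)` matrix with entries in `{±1,…,±n}`, distinct columns,
and containing an anti-circuit (in rows `1, 2`) is invalid: for some nonzero `b ∈ ℝ²`
the origin is a convex combination of the columns of `M(A,b)`. -/
theorem stmt9 (n m : ℕ) (A : Fin 2 → Fin (m + 1) → ℤ)
    (hA : ∀ i j, 1 ≤ |A i j| ∧ |A i j| ≤ (n : ℤ))
    (hcol : Function.Injective (fun j => fun i => A i j))
    (hanti : ∃ p : ℕ, ∃ j : Fin (p + 1) → Fin (m + 1),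
      Function.Injective j ∧ ∀ α, A 1 (j α) = -(A 0 (j (α + 1)))) :
    ∃ b : Fin 2 → ℝ, b ≠ 0 ∧
      (0 : EuclideanSpace ℝ (Fin n)) ∈ convexHull ℝ (Set.range (inducedCol n m A b)) :=
  stmt9_general n m A hanti
end

section
/- Let A be a 2×(m+1) matrix with entries in {±1,…,±n} and distinct columns. If A contains a circuit, i.e., distinct columns j₁,…,j_p with a_{2,j_α} = a_{1,j_{α+1}} for 1 ≤ α ≤ p−1 and a_{2,j_p} = a_{1,j₁}, then A is invalid: with b = (1,−1), the origin lies in the convex hull of the columns of the induced matrix M(A,b). -/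
/-! Along a circuit `j`, the column `j α` of `M(A, (1, -1))` is
`e(a_{1,j α}) - e(a_{1,j (α+1)})`, so the circuit's columns telescope to `0`,
and their barycentre is the origin. -/

theorem Fin.sum_sub_add_one {M : Type*} [AddCommGroup M] {p : ℕ} (f : Fin (p + 1) → M) :
    ∑ α, (f α - f (α + 1)) = 0 := by
  rw [Finset.sum_sub_distrib, sub_eq_zero]
  exact (Equiv.sum_comp (Equiv.addRight 1) f).symm

theorem zero_mem_convexHull_range_of_sum_eq_zero {𝕜 E ι : Type*} [Field 𝕜] [LinearOrder 𝕜]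
    [IsStrictOrderedRing 𝕜] [AddCommGroup E] [Module 𝕜 E] [Fintype ι] [Nonempty ι]
    {z : ι → E} (hz : ∑ i, z i = 0) : (0 : E) ∈ convexHull 𝕜 (Set.range z) := by
  have h := Finset.univ.centerMass_mem_convexHull (w := fun _ => (1 : 𝕜))
    (fun _ _ => zero_le_one) (by simp [Fintype.card_pos]) fun i _ => Set.mem_range_self (f := z) i
  rwa [Finset.centerMass, Finset.sum_congr rfl fun i _ => one_smul 𝕜 (z i), hz, smul_zero] at h

theorem inducedCol_one_neg_one (n m : ℕ) (A : Fin 2 → Fin (m + 1) → ℤ) (j : Fin (m + 1)) :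
    inducedCol n m A ![1, -1] j = entryVec n (A 0 j) - entryVec n (A 1 j) := by
  simp [inducedCol, sub_eq_add_neg]

theorem stmt10_general (n m : ℕ) (A : Fin 2 → Fin (m + 1) → ℤ)
    (hcirc : ∃ p : ℕ, ∃ j : Fin (p + 1) → Fin (m + 1),
      Function.Injective j ∧ ∀ α, A 1 (j α) = A 0 (j (α + 1))) :
    (0 : EuclideanSpace ℝ (Fin n)) ∈
      convexHull ℝ (Set.range (inducedCol n m A ![1, -1])) := by
  obtain ⟨p, j, -, hc⟩ := hcirc
  refine convexHull_mono (Set.range_comp_subset_range j _)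
    (zero_mem_convexHull_range_of_sum_eq_zero ?_)
  simp only [Function.comp_apply, inducedCol_one_neg_one, hc]
  exact Fin.sum_sub_add_one fun α => entryVec n (A 0 (j α))

/-- a `2 × (m+1)` matrix with entries in `{±1,…,±n}`, distinct columns,
and containing a circuit (in rows `1, 2`) is invalid: with `b = (1,−1)`, the origin
lies in the convex hull of the columns of `M(A,b)`. -/
theorem stmt10 (n m : ℕ) (A : Fin 2 → Fin (m + 1) → ℤ)
    (hA : ∀ i j, 1 ≤ |A i j| ∧ |A i j| ≤ (n : ℤ))
    (hcol : Function.Injective (fun j => fun i => A i j))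
    (hcirc : ∃ p : ℕ, ∃ j : Fin (p + 1) → Fin (m + 1),
      Function.Injective j ∧ ∀ α, A 1 (j α) = A 0 (j (α + 1))) :
    (0 : EuclideanSpace ℝ (Fin n)) ∈
      convexHull ℝ (Set.range (inducedCol n m A ![1, -1])) :=
  stmt10_general n m A hcirc
end
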